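/- arXiv:2408.05483 — 4 statements merged into one kernel-verified Lean document; each statement's English description precedes it below -/
import Mathlib

section
/- Fix a planar rooted tree T with n edges and let S := { τ(L) : L a decreasing label of T }, equipped with the sequence cover relation ⋖; let ρ(τ) denote the length of an unrefinable ⋖-chain from the minimal element of S to τ (this length is independent of the choice of chain). If τ₁ ≠ τ₂ are elements of S with ρ(τ₁) = ρ(τ₂) ≠ 0, then there is no pair of distinct elements τ ≠ τ' of S such that each of τ and τ' covers both τ₁ and τ₂. -/
noncomputable section

/-- The balance (number of `U`s minus number of `D`s) of the word `w` on `[a, b)`,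
where `true` encodes an up step `U` and `false` a down step `D`. -/
def bal (w : ℕ → Bool) (a b : ℕ) : ℤ :=
  (((Finset.Ico a b).filter fun k => w k = true).card : ℤ) -
    (((Finset.Ico a b).filter fun k => w k = false).card : ℤ)

/-- `w` encodes a Dyck path of size `n` (only the first `2n` letters are used; the
rest are normalized to `false`). -/
def IsDyckWord (n : ℕ) (w : ℕ → Bool) : Prop :=
  (∀ k, 2 * n ≤ k → w k = false) ∧ bal w 0 (2 * n) = 0 ∧
    ∀ m, m ≤ 2 * n → 0 ≤ bal w 0 m

/-- `(i,j)` is a chord pair of `w`: `j` is the matching down step of the up step `i`. -/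
def IsChord (w : ℕ → Bool) (i j : ℕ) : Prop :=
  i < j ∧ w i = true ∧ w j = false ∧ bal w i (j + 1) = 0 ∧
    ∀ m, i < m → m ≤ j → 0 < bal w i m

/-- The edges of the planar rooted tree corresponding to `w`, i.e. its chord pairs. -/
def Edge (w : ℕ → Bool) : Type := {p : ℕ × ℕ // IsChord w p.1 p.2}

/-- `InPath w e e'` means `e' ∈ p(e)`: `e'` lies on the path from `e` to the root
(equivalently the chord `e'` nests the chord `e`); it is reflexive. -/
def InPath (w : ℕ → Bool) (e e' : Edge w) : Prop :=
  e'.1.1 ≤ e.1.1 ∧ e.1.2 ≤ e'.1.2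

/-- `SRight w e e'` means the edge `e` is strictly right of the edge `e'`. -/
def SRight (w : ℕ → Bool) (e e' : Edge w) : Prop := e'.1.2 < e.1.1

/-- A label of the tree: a bijection from the edges onto `{1, …, n}`. -/
def IsLabel (n : ℕ) (w : ℕ → Bool) (L : Edge w → ℕ) : Prop :=
  (∀ e, 1 ≤ L e ∧ L e ≤ n) ∧ Function.Injective L ∧
    ∀ v, 1 ≤ v → v ≤ n → ∃ e, L e = v

/-- A decreasing label: labels strictly decrease from the root towards the leaves,
i.e. a strict ancestor carries a strictly bigger label. -/
def IsDecLabel (n : ℕ) (w : ℕ → Bool) (L : Edge w → ℕ) : Prop :=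
  IsLabel n w L ∧ ∀ e e', InPath w e e' → e ≠ e' → L e < L e'

/-- An increasing label: labels strictly increase from the root towards the leaves. -/
def IsIncLabel (n : ℕ) (w : ℕ → Bool) (L : Edge w → ℕ) : Prop :=
  IsLabel n w L ∧ ∀ e e', InPath w e e' → e ≠ e' → L e' < L e

/-- The cover relation on labels of monotone type `P` (Definition of the paper):
`L'` covers `L` if they differ by swapping the labels of an edge `e_l` strictly left of
an edge `e_r` with `L e_l < L e_r`, with no edge strictly between them carrying a label
in `[L e_l, L e_r]`, and both labels have type `P`. -/
def Covers (w : ℕ → Bool) (P : (Edge w → ℕ) → Prop) (L L' : Edge w → ℕ) : Prop :=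
  P L ∧ P L' ∧ ∃ el er : Edge w, SRight w er el ∧
    (∀ e, e ≠ el → e ≠ er → L e = L' e) ∧
    L el < L er ∧ L' er = L el ∧ L' el = L er ∧
    ¬ ∃ ec : Edge w, SRight w ec el ∧ SRight w er ec ∧ L el ≤ L ec ∧ L ec ≤ L er

/-- The inversion number of the post-order word of the label `L`: the number of pairs
of edges `(e', e)` with `e'` before `e` in post-order (equivalently, the closing
position of `e'` is smaller) and `L e' < L e`. -/
def invNum (w : ℕ → Bool) (L : Edge w → ℕ) : ℕ :=
  Nat.card {p : Edge w × Edge w // p.1.1.2 < p.2.1.2 ∧ L p.1 < L p.2}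

/-- The generating function `Z(L, T) = Σ_{L ≤ L'} q^{inv(ω(L'))}`, summed over all
labels `L'` of monotone type `P` reachable from `L` by a chain of covers. -/
def Zgen (w : ℕ → Bool) (P : (Edge w → ℕ) → Prop) (L : Edge w → ℕ) : Polynomial ℤ :=
  ∑ᶠ (L' : Edge w → ℕ) (_ : P L' ∧ Relation.ReflTransGen (Covers w P) L L'),
    Polynomial.X ^ invNum w L'

/-- The quantum integer `[m] = 1 + q + ⋯ + q^{m-1}`. -/
def qInt (m : ℕ) : Polynomial ℤ := ∑ i ∈ Finset.range m, Polynomial.X ^ i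

/-- The quantum factorial `[m]!`. -/
def qFact (m : ℕ) : Polynomial ℤ := ∏ i ∈ Finset.range m, qInt (i + 1)

/-- The integer sequence `τ(L)` of a decreasing label `L` (1-based index `i`):
`τ_i = 2·#{j > n+1−i : e(j) strictly right of e(n+1−i)}
       + #{j > n+1−i : e(j) ∈ p(e(n+1−i))}`,
where `e(k)` is the edge with label `k`. -/
def tauSeq (n : ℕ) (w : ℕ → Bool) (L : Edge w → ℕ) : ℕ → ℕ := fun i =>
  2 * Nat.card {q : Edge w × Edge w //
        L q.1 = n + 1 - i ∧ n + 1 - i < L q.2 ∧ SRight w q.2 q.1} +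
    Nat.card {q : Edge w × Edge w //
        L q.1 = n + 1 - i ∧ n + 1 - i < L q.2 ∧ InPath w q.1 q.2}

/-- The cover relation on integer sequences (positions `1, …, n`): `τ' ` covers `τ` if
there are `1 ≤ i < j ≤ n` with `τ_j ≥ τ_i + 2`, `τ_k ≥ τ_j` for `i < k < j`,
`τ'_i = τ_j − 2`, `τ'_j = τ_i`, and `τ'_k = τ_k` otherwise. -/
def SeqCover (n : ℕ) (τ τ' : ℕ → ℕ) : Prop :=
  ∃ i j : ℕ, 1 ≤ i ∧ i < j ∧ j ≤ n ∧
    τ i + 2 ≤ τ j ∧ (∀ k, i < k → k < j → τ j ≤ τ k) ∧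
    τ' i = τ j - 2 ∧ τ' j = τ i ∧ ∀ k, k ≠ i → k ≠ j → τ' k = τ k

/-- `ChainLen r p a b`: there is a chain `a = x₀ r x₁ r ⋯ r x_p = b` of length `p`. -/
def ChainLen {α : Sort*} (r : α → α → Prop) : ℕ → α → α → Prop
  | 0, a, b => a = b
  | p + 1, a, b => ∃ c, r a c ∧ ChainLen r p c b

/-- The set `S = {τ(L) : L a decreasing label of the tree of w}`. -/
def TauSet (n : ℕ) (w : ℕ → Bool) : Set (ℕ → ℕ) :=
  {σ | ∃ L : Edge w → ℕ, IsDecLabel n w L ∧ σ = tauSeq n w L}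

/-- The sequence cover relation restricted to the poset `S`. -/
def SCr (n : ℕ) (w : ℕ → Bool) (σ σ' : ℕ → ℕ) : Prop :=
  σ ∈ TauSet n w ∧ σ' ∈ TauSet n w ∧ SeqCover n σ σ'


private lemma upEq (t u v : ℕ → ℕ) (i j : ℕ)
    (hV1 : u i = t j - 2) (hV2 : u j = t i) (hO1 : ∀ k, k ≠ i → k ≠ j → u k = t k)
    (hV5 : v i = t j - 2) (hV6 : v j = t i) (hO3 : ∀ k, k ≠ i → k ≠ j → v k = t k) :
    u = v := by
  funext k
  by_cases h1 : k = i
  · subst h1; rw [hV1, hV5]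
  · by_cases h2 : k = j
    · subst h2; rw [hV2, hV6]
    · rw [hO1 k h1 h2, hO3 k h1 h2]

private lemma baseEq (t1 t2 u : ℕ → ℕ) (i j : ℕ)
    (hE1 : t1 i + 2 ≤ t1 j)
    (hV1 : u i = t1 j - 2) (hV2 : u j = t1 i) (hO1 : ∀ k, k ≠ i → k ≠ j → u k = t1 k)
    (hE2 : t2 i + 2 ≤ t2 j)
    (hV3 : u i = t2 j - 2) (hV4 : u j = t2 i) (hO2 : ∀ k, k ≠ i → k ≠ j → u k = t2 k) :
    t1 = t2 := by
  funext k
  by_cases h1 : k = i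
  · subst h1; rw [← hV2]; exact hV4
  · by_cases h2 : k = j
    · subst h2; omega
    · rw [← hO1 k h1 h2]; exact hO2 k h1 h2

private lemma dichotomy (t1 t2 u : ℕ → ℕ) (i j a b : ℕ) (hij : i < j) (hab : a < b)
    (hE1 : t1 i + 2 ≤ t1 j) (hB1 : ∀ k, i < k → k < j → t1 j ≤ t1 k)
    (hV1 : u i = t1 j - 2) (hV2 : u j = t1 i) (hO1 : ∀ k, k ≠ i → k ≠ j → u k = t1 k)
    (hE2 : t2 a + 2 ≤ t2 b) (hB2 : ∀ k, a < k → k < b → t2 b ≤ t2 k)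
    (hV3 : u a = t2 b - 2) (hV4 : u b = t2 a) (hO2 : ∀ k, k ≠ a → k ≠ b → u k = t2 k)
    (hPQ : ¬(i = a ∧ j = b)) :
    (b ≤ j ∧ t2 j < t1 j) ∨ (j ≤ b ∧ t1 b < t2 b) := by
  rcases lt_trichotomy j b with h | h | h
  · right
    have h4 := hO1 b (by omega) (by omega)
    omega
  · subst h
    have hia : i ≠ a := fun hh => hPQ ⟨hh, rfl⟩
    rcases hia.lt_or_gt with h2 | h2
    · have h3 := hB1 a h2 hab
      have h4 := hO1 a (by omega) (by omega)
      right
      omega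
    · have h3 := hB2 i h2 hij
      have h4 := hO2 i (by omega) (by omega)
      left
      omega
  · left
    have h4 := hO2 j (by omega) (by omega)
    omega

/-- in the poset `S` of `τ`-sequences of decreasing labels of the tree of
`w`, with minimum `τ0` and rank given by the (chain-independent) length of unrefinable
cover chains from `τ0`, if `τ1 ≠ τ2` have equal nonzero rank then there is no pair of
distinct elements `τ ≠ τ'` of `S` each of which covers both `τ1` and `τ2`. -/
theorem stmt13 (n : ℕ) (w : ℕ → Bool) (hw : IsDyckWord n w)
    (τ0 : ℕ → ℕ) (hτ0 : τ0 ∈ TauSet n w)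
    (hmin : ∀ σ ∈ TauSet n w, Relation.ReflTransGen (SCr n w) τ0 σ)
    (τ1 τ2 : ℕ → ℕ) (h1 : τ1 ∈ TauSet n w) (h2 : τ2 ∈ TauSet n w) (hne : τ1 ≠ τ2)
    (p : ℕ) (hp : p ≠ 0)
    (hc1 : ChainLen (SCr n w) p τ0 τ1) (hc2 : ChainLen (SCr n w) p τ0 τ2) :
    ¬ ∃ τ τ' : ℕ → ℕ, τ ≠ τ' ∧
        SCr n w τ1 τ ∧ SCr n w τ2 τ ∧ SCr n w τ1 τ' ∧ SCr n w τ2 τ' := by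
  rintro ⟨u, v, huv, ⟨-, -, s1⟩, ⟨-, -, s2⟩, ⟨-, -, s3⟩, ⟨-, -, s4⟩⟩
  obtain ⟨i, j, hi1, hij, hjn, hE1, hB1, hV1, hV2, hO1⟩ := s1
  obtain ⟨a, b, ha1, hab, hbn, hE2, hB2, hV3, hV4, hO2⟩ := s2
  obtain ⟨i2, j2, hi12, hij2, hjn2, hE3, hB3, hV5, hV6, hO3⟩ := s3
  obtain ⟨a2, b2, ha12, hab2, hbn2, hE4, hB4, hV7, hV8, hO4⟩ := s4
  have hPQ : ¬(i = a ∧ j = b) := by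
    rintro ⟨rfl, rfl⟩
    exact hne (baseEq τ1 τ2 u i j hE1 hV1 hV2 hO1 hE2 hV3 hV4 hO2)
  have hPQ2 : ¬(i2 = a2 ∧ j2 = b2) := by
    rintro ⟨rfl, rfl⟩
    exact hne (baseEq τ1 τ2 v i2 j2 hE3 hV5 hV6 hO3 hE4 hV7 hV8 hO4)
  have mem1 : ∀ k, τ1 k ≠ τ2 k → k = i ∨ k = j ∨ k = a ∨ k = b := by
    intro k hk
    by_contra h
    push_neg at h
    obtain ⟨h1, h2, h3, h4⟩ := h
    exact hk ((hO1 k h1 h2).symm.trans (hO2 k h3 h4))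
  have mem2 : ∀ k, τ1 k ≠ τ2 k → k = i2 ∨ k = j2 ∨ k = a2 ∨ k = b2 := by
    intro k hk
    by_contra h
    push_neg at h
    obtain ⟨h1, h2, h3, h4⟩ := h
    exact hk ((hO3 k h1 h2).symm.trans (hO4 k h3 h4))
  have D1 := dichotomy τ1 τ2 u i j a b hij hab hE1 hB1 hV1 hV2 hO1 hE2 hB2 hV3 hV4 hO2 hPQ
  have D2 := dichotomy τ1 τ2 v i2 j2 a2 b2 hij2 hab2 hE3 hB3 hV5 hV6 hO3 hE4 hB4 hV7 hV8 hO4 hPQ2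
  rcases D1 with ⟨hbj, hj⟩ | ⟨hjb, hb⟩ <;> rcases D2 with ⟨hbj2, hj2⟩ | ⟨hjb2, hb2⟩
  · -- both first: j = j2
    have m1 := mem2 j (by omega)
    have m2 := mem1 j2 (by omega)
    obtain rfl : j = j2 := by omega
    have hii : i ≠ i2 := by
      rintro rfl
      exact huv (upEq τ1 u v i j hV1 hV2 hO1 hV5 hV6 hO3)
    rcases hii.lt_or_gt with h | h
    · have := hB1 i2 h hij2
      omega
    · have := hB3 i h hij
      omega
  · -- mixed: j = b2
    have m1 := mem2 j (by omega)
    have m2 := mem1 b2 (by omega)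
    obtain rfl : j = b2 := by omega
    omega
  · -- mixed: b = j2
    have m1 := mem2 b (by omega)
    have m2 := mem1 j2 (by omega)
    obtain rfl : b = j2 := by omega
    omega
  · -- both second: b = b2
    have m1 := mem2 b (by omega)
    have m2 := mem1 b2 (by omega)
    obtain rfl : b = b2 := by omega
    have haa : a ≠ a2 := by
      rintro rfl
      exact huv (upEq τ2 u v a b hV3 hV4 hO2 hV7 hV8 hO4)
    rcases haa.lt_or_gt with h | h
    · have := hB2 a2 h hab2
      omega
    · have := hB4 a h hab
      omega


end
end

section
/- Let n, k ≥ 1 and let μ = (μ₁,…,μ_n) be integers with 0 ≤ μ_i ≤ (n−i)k for all i. Construct pairwise disjoint k-element sets S₁,…,S_n ⊆ {1,…,nk} by: starting with S = {1,…,nk}, for i = 1,…,n let S_i consist of the elements of S in positions μ_i+1, μ_i+2, …, μ_i+k of the increasing ordering of S (equivalently, the k elements of S that are consecutive within S beginning at the (μ_i+1)-th smallest element of S), and then remove S_i from S. Define the sequence s = (s₁,…,s_{nk}) by s_j = n+1−i for j ∈ S_i. Then s is a k-Stirling permutation of size n: it is a rearrangement of the multiset {1^k, 2^k, …, n^k},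 and whenever s_p = s_q with p < q, every entry s_r with p ≤ r ≤ q satisfies s_r ≥ s_p. -/
/-!
Each `S_i` is a block of `k` consecutive elements of the current remainder `R_i`, and all
later blocks lie in `R_{i+1} ⊆ R_i`. The bound on `μ_i` makes every block have exactly `k`
elements, so the blocks partition `{1, …, nk}` and `s` takes each value `k` times.
If `p ≤ r ≤ q` with `p, q ∈ S_i` and `r ∈ S_m`, then `m > i` is impossible: `r` would lie in
`R_i` between two elements of the block `S_i`, hence in `S_i` itself. So `m ≤ i`, i.e.
`s_r = n - m ≥ n - i = s_p`.
-/

/-- The set of still-unused integers before step `i` of the construction: start with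
`{1, …, nk}` and repeatedly remove the chosen `k`-element set. -/
def remSet (n k : ℕ) (μ : ℕ → ℕ) : ℕ → Finset ℕ
  | 0 => Finset.Icc 1 (n * k)
  | i + 1 =>
      remSet n k μ i \
        ((((remSet n k μ i).sort (· ≤ ·)).drop (μ i)).take k).toFinset

/-- `S_{i+1}` (0-based `i`): the `k` elements of the remaining set `remSet i` in
positions `μ_i + 1, …, μ_i + k` of its increasing ordering. -/
def Sset (n k : ℕ) (μ : ℕ → ℕ) (i : ℕ) : Finset ℕ :=
  ((((remSet n k μ i).sort (· ≤ ·)).drop (μ i)).take k).toFinset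

/-- The sequence `s`: `s j = n + 1 − i` (1-based `i`) for `j ∈ S_i`. -/
def stirling (n k : ℕ) (μ : ℕ → ℕ) (j : ℕ) : ℕ :=
  ∑ i ∈ Finset.range n, if j ∈ Sset n k μ i then n - i else 0

theorem List.Pairwise.mem_of_isInfix_of_le_of_le {α : Type*} [Preorder α] {L M : List α}
    (hL : L.Pairwise (· < ·)) (hM : M <:+: L) {x y z : α} (hx : x ∈ M) (hz : z ∈ M)
    (hy : y ∈ L) (hxy : x ≤ y) (hyz : y ≤ z) : y ∈ M := by
  obtain ⟨s, t, rfl⟩ := hM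
  simp only [List.pairwise_append, List.mem_append] at hL hy
  obtain ⟨⟨-, -, hsM⟩, -, hsMt⟩ := hL
  rcases hy with (hy | hy) | hy
  · exact ((hsM y hy x hx).trans_le hxy).false.elim
  · exact hy
  · exact (hyz.trans_lt (hsMt z (.inr hz) y hy)).false.elim

namespace Stirling

variable {n k : ℕ} {μ : ℕ → ℕ}

theorem remSet_succ (i : ℕ) : remSet n k μ (i + 1) = remSet n k μ i \ Sset n k μ i := rfl

theorem Sset_subset_remSet (i : ℕ) : Sset n k μ i ⊆ remSet n k μ i := fun _ hx =>
  (Finset.mem_sort _).1 <| List.drop_subset _ _ <| List.take_subset _ _ <| List.mem_toFinset.1 hx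

theorem remSet_antitone : Antitone (remSet n k μ) :=
  antitone_nat_of_succ_le fun _ => Finset.sdiff_subset

theorem card_Sset (i : ℕ) :
    (Sset n k μ i).card = min k ((remSet n k μ i).card - μ i) := by
  have hnodup : ((((remSet n k μ i).sort (· ≤ ·)).drop (μ i)).take k).Nodup :=
    ((List.take_sublist _ _).trans (List.drop_sublist _ _)).nodup (Finset.sort_nodup _ _)
  rw [Sset, List.toFinset_card_of_nodup hnodup, List.length_take, List.length_drop,
    Finset.length_sort]

theorem pairwise_disjoint_Sset :
    Pairwise fun i j => Disjoint (Sset n k μ i) (Sset n k μ j) := by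
  suffices h : ∀ {i j}, i < j → Disjoint (Sset n k μ i) (Sset n k μ j) from
    fun i j hij => hij.lt_or_gt.elim h fun h' => (h h').symm
  intro i j hij
  have hj : Sset n k μ j ⊆ remSet n k μ i \ Sset n k μ i :=
    (Sset_subset_remSet j).trans (remSet_antitone hij)
  exact Finset.disjoint_of_subset_right hj Finset.disjoint_sdiff

theorem remSet_eq_sdiff_biUnion (m : ℕ) :
    remSet n k μ m = Finset.Icc 1 (n * k) \ (Finset.range m).biUnion (Sset n k μ) := by
  induction m with
  | zero => simp [remSet]
  | succ m ih => rw [remSet_succ, ih, Finset.range_add_one, Finset.biUnion_insert,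
      sdiff_sdiff_left, Finset.sup_eq_union, Finset.union_comm]

theorem mem_Sset_of_le_of_le {i p q r : ℕ} (hp : p ∈ Sset n k μ i) (hq : q ∈ Sset n k μ i)
    (hr : r ∈ remSet n k μ i) (hpr : p ≤ r) (hrq : r ≤ q) : r ∈ Sset n k μ i := by
  have hinfix : (((remSet n k μ i).sort (· ≤ ·)).drop (μ i)).take k <:+:
      (remSet n k μ i).sort (· ≤ ·) :=
    (List.take_prefix _ _).isInfix.trans (List.drop_suffix _ _).isInfix
  exact List.mem_toFinset.2 <| (Finset.sortedLT_sort _).pairwise.mem_of_isInfix_of_le_of_le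
    hinfix (List.mem_toFinset.1 hp) (List.mem_toFinset.1 hq) ((Finset.mem_sort _).2 hr) hpr hrq

theorem le_of_mem_Sset_of_le_of_le {i m p q r : ℕ} (hp : p ∈ Sset n k μ i)
    (hq : q ∈ Sset n k μ i) (hr : r ∈ Sset n k μ m) (hpr : p ≤ r) (hrq : r ≤ q) :
    m ≤ i := by
  by_contra! him
  have hrRem : r ∈ remSet n k μ i \ Sset n k μ i :=
    remSet_antitone him (Sset_subset_remSet m hr)
  exact (Finset.mem_sdiff.1 hrRem).2 <|
    mem_Sset_of_le_of_le hp hq (Finset.mem_sdiff.1 hrRem).1 hpr hrq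

theorem stirling_eq_of_mem_Sset {i j : ℕ} (hi : i < n) (hj : j ∈ Sset n k μ i) :
    stirling n k μ j = n - i := by
  rw [stirling, Finset.sum_eq_single_of_mem i (Finset.mem_range.2 hi), if_pos hj]
  exact fun b _ hbi => if_neg fun hb => Finset.disjoint_left.1 (pairwise_disjoint_Sset hbi) hb hj

theorem card_Sset_of_card_remSet (hμ : ∀ i, i < n → μ i ≤ (n - 1 - i) * k) {i : ℕ}
    (hi : i < n) (hrem : (remSet n k μ i).card = (n - i) * k) : (Sset n k μ i).card = k := by
  have hμi : μ i + k ≤ (n - i) * k := by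
    rw [show n - i = n - 1 - i + 1 by omega, add_one_mul]
    exact Nat.add_le_add_right (hμ i hi) k
  rw [card_Sset, hrem]
  omega

theorem card_remSet (hμ : ∀ i, i < n → μ i ≤ (n - 1 - i) * k) {i : ℕ}
    (hi : i ≤ n) : (remSet n k μ i).card = (n - i) * k := by
  induction i with
  | zero => simp [remSet]
  | succ i ih =>
    have hrem := ih (by omega)
    rw [remSet_succ, Finset.card_sdiff_of_subset (Sset_subset_remSet i), hrem,
      card_Sset_of_card_remSet hμ hi hrem, ← Nat.sub_one_mul, Nat.sub_sub]

theorem card_Sset_of_lt (hμ : ∀ i, i < n → μ i ≤ (n - 1 - i) * k) {i : ℕ}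
    (hi : i < n) : (Sset n k μ i).card = k :=
  card_Sset_of_card_remSet hμ hi (card_remSet hμ hi.le)

theorem exists_mem_Sset (hμ : ∀ i, i < n → μ i ≤ (n - 1 - i) * k) {j : ℕ}
    (hj : j ∈ Finset.Icc 1 (n * k)) :
    ∃ i < n, j ∈ Sset n k μ i := by
  have hempty : remSet n k μ n = ∅ := by
    simpa using card_remSet hμ le_rfl
  rw [remSet_eq_sdiff_biUnion, Finset.sdiff_eq_empty_iff_subset] at hempty
  simpa using hempty hj

theorem filter_stirling_eq (hμ : ∀ i, i < n → μ i ≤ (n - 1 - i) * k) {v : ℕ}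
    (hv : 1 ≤ v) (hvn : v ≤ n) :
    (Finset.Icc 1 (n * k)).filter (fun j => stirling n k μ j = v) = Sset n k μ (n - v) := by
  ext j
  rw [Finset.mem_filter]
  constructor
  · rintro ⟨hj, hjv⟩
    obtain ⟨i, hi, hji⟩ := exists_mem_Sset hμ hj
    rw [stirling_eq_of_mem_Sset hi hji] at hjv
    rwa [← show i = n - v by omega]
  · intro hj
    refine ⟨remSet_antitone (Nat.zero_le _) (Sset_subset_remSet _ hj), ?_⟩
    rw [stirling_eq_of_mem_Sset (by omega) hj]
    omega

end Stirling

open Stirling in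
theorem stmt15_general (n k : ℕ) (μ : ℕ → ℕ)
    (hμ : ∀ i, i < n → μ i ≤ (n - 1 - i) * k) :
    (∀ v, 1 ≤ v → v ≤ n →
      ((Finset.Icc 1 (n * k)).filter fun j => stirling n k μ j = v).card = k) ∧
    (∀ p q r, 1 ≤ p → q ≤ n * k → p < q → p ≤ r → r ≤ q →
      stirling n k μ p = stirling n k μ q →
      stirling n k μ p ≤ stirling n k μ r) := by
  refine ⟨fun v hv hvn => ?_, fun p q r hp hq _ hpr hrq hpq => ?_⟩
  · rw [filter_stirling_eq hμ hv hvn, card_Sset_of_lt hμ (by omega)]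
  · obtain ⟨i, hi, hpi⟩ := exists_mem_Sset hμ (j := p) (Finset.mem_Icc.2 ⟨hp, by omega⟩)
    obtain ⟨i', hi', hqi'⟩ := exists_mem_Sset hμ (j := q) (Finset.mem_Icc.2 ⟨by omega, hq⟩)
    obtain ⟨m, hm, hrm⟩ :=
      exists_mem_Sset hμ (j := r) (Finset.mem_Icc.2 ⟨by omega, by omega⟩)
    rw [stirling_eq_of_mem_Sset hi hpi, stirling_eq_of_mem_Sset hi' hqi'] at hpq
    obtain rfl : i = i' := by omega
    rw [stirling_eq_of_mem_Sset hi hpi, stirling_eq_of_mem_Sset hm hrm]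
    have hmi := le_of_mem_Sset_of_le_of_le hpi hqi' hrm hpr hrq
    omega

/-- for `n, k ≥ 1` and `0 ≤ μ_i ≤ (n−i)k` (1-based `i`; here 0-based),
the sequence `s` constructed from the sets `S₁, …, S_n` is a `k`-Stirling permutation
of size `n`: every value `v ∈ {1, …, n}` occurs exactly `k` times among
`s_1, …, s_{nk}`, and whenever `s_p = s_q` with `p < q`, every `s_r` with `p ≤ r ≤ q`
satisfies `s_r ≥ s_p`. -/
theorem stmt15 (n k : ℕ) (hn : 1 ≤ n) (hk : 1 ≤ k) (μ : ℕ → ℕ)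
    (hμ : ∀ i, i < n → μ i ≤ (n - 1 - i) * k) :
    (∀ v, 1 ≤ v → v ≤ n →
      ((Finset.Icc 1 (n * k)).filter fun j => stirling n k μ j = v).card = k) ∧
    (∀ p q r, 1 ≤ p → q ≤ n * k → p < q → p ≤ r → r ≤ q →
      stirling n k μ p = stirling n k μ q →
      stirling n k μ p ≤ stirling n k μ r) :=
  stmt15_general n k μ hμ
end

section
/- Let n, k ≥ 1 and let μ = (μ₁,…,μ_n) be integers with 0 ≤ μ_i ≤ (n−i)k. Let S₁,…,S_n and the k-Stirling permutation s be constructed from μ as follows: starting with S = {1,…,nk}, for i = 1,…,n let S_i consist of the elements of S in positions μ_i+1,…,μ_i+k of the increasing ordering of S and remove S_i from S; set s_j = n+1−i for j ∈ S_i. Then μ is recovered from s: for every 1 ≤ i ≤ n, μ_i = #{ p < j(i) : s_p < s_{j(i)} }, where j(i) is the smallest index with s_{j(i)} = n+1−i (i.e., μ_i equals the number of entries smaller than n+1−i occurring before the first occurrence of n+1−i in s). -/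
open Finset

theorem List.Pairwise.isLeast_head {α : Type*} [Preorder α] {l : List α}
    (hl : l.Pairwise (· ≤ ·)) (hne : l ≠ []) : IsLeast {y | y ∈ l} (l.head hne) := by
  cases l with
  | nil => exact absurd rfl hne
  | cons a t => exact ⟨List.mem_cons_self, fun y hy => (List.mem_cons.1 hy).elim (·.ge)
      ((List.pairwise_cons.1 hl).1 y)⟩

namespace Finset

variable {α : Type*} [LinearOrder α]

theorem card_filter_lt_sort_getElem (s : Finset α) {m : ℕ}
    (hm : m < (s.sort (· ≤ ·)).length) : #{y ∈ s | y < (s.sort (· ≤ ·))[m]} = m := by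
  rw [length_sort] at hm
  set f := s.orderEmbOfFin rfl
  have hfilter : {y ∈ s | y < f ⟨m, hm⟩} = (Iio ⟨m, hm⟩).map f.toEmbedding := by
    ext y
    simp only [mem_filter, mem_map, mem_Iio, RelEmbedding.coe_toEmbedding]
    rw [← mem_coe, ← range_orderEmbOfFin s rfl]
    constructor
    · rintro ⟨⟨j, rfl⟩, hj⟩
      exact ⟨j, f.lt_iff_lt.1 hj, rfl⟩
    · rintro ⟨j, hj, rfl⟩
      exact ⟨⟨j, rfl⟩, f.lt_iff_lt.2 hj⟩
  exact (congrArg card hfilter).trans (by rw [card_map, Fin.card_Iio])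

theorem card_filter_lt_of_isLeast_window (s : Finset α) {m k : ℕ} {x : α}
    (hx : IsLeast ↑(((s.sort (· ≤ ·)).drop m).take k).toFinset x) : #{y ∈ s | y < x} = m := by
  set l := s.sort (· ≤ ·)
  have hwin : ((l.drop m).take k).Pairwise (· ≤ ·) :=
    (pairwise_sort s _).sublist ((List.take_sublist _ _).trans (List.drop_sublist _ _))
  have hne : (l.drop m).take k ≠ [] := List.ne_nil_of_mem (List.mem_toFinset.1 hx.1)
  have hdrop : l.drop m ≠ [] := fun h => hne (by rw [h, List.take_nil])
  have hm : m < l.length := by simpa using hdrop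
  have hleast := hwin.isLeast_head hne
  rw [List.head_take, List.head_drop] at hleast
  have hxm : x = l[m] := hx.unique (by rwa [List.coe_toFinset])
  rw [hxm, card_filter_lt_sort_getElem s hm]

end Finset

section Construction

variable {n k : ℕ} {μ : ℕ → ℕ}

theorem Sset_subset_remSet (i : ℕ) : Sset n k μ i ⊆ remSet n k μ i := fun p hp => by
  simpa using ((List.take_sublist _ _).trans (List.drop_sublist _ _)).subset
    (List.mem_toFinset.1 hp)

theorem remSet_succ (i : ℕ) : remSet n k μ (i + 1) = remSet n k μ i \ Sset n k μ i := rfl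

theorem mem_remSet_iff {p j : ℕ} :
    p ∈ remSet n k μ j ↔ p ∈ Icc 1 (n * k) ∧ ∀ i < j, p ∉ Sset n k μ i := by
  induction j with
  | zero => simp [remSet]
  | succ j ih => rw [remSet_succ, mem_sdiff, ih, Nat.forall_lt_succ_right, and_assoc]

theorem mem_Icc_of_mem_Sset {i p : ℕ} (hp : p ∈ Sset n k μ i) : p ∈ Icc 1 (n * k) :=
  (mem_remSet_iff.1 (Sset_subset_remSet i hp)).1

theorem eq_of_mem_Sset_of_mem_Sset {i j p : ℕ} (hi : p ∈ Sset n k μ i)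
    (hj : p ∈ Sset n k μ j) : i = j := by
  by_contra hij
  rcases Nat.lt_or_gt_of_ne hij with h | h
  · exact (mem_remSet_iff.1 (Sset_subset_remSet j hj)).2 i h hi
  · exact (mem_remSet_iff.1 (Sset_subset_remSet i hi)).2 j h hj

theorem stirling_eq_of_mem_Sset {i p : ℕ} (hi : i < n) (hp : p ∈ Sset n k μ i) :
    stirling n k μ p = n - i := by
  rw [stirling, sum_eq_single_of_mem i (mem_range.2 hi) fun j _ hji =>
    if_neg fun hpj => hji (eq_of_mem_Sset_of_mem_Sset hpj hp), if_pos hp]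

theorem stirling_eq_zero {p : ℕ} (hp : ∀ i < n, p ∉ Sset n k μ i) : stirling n k μ p = 0 :=
  sum_eq_zero fun i hi => if_neg (hp i (mem_range.1 hi))

theorem mem_Sset_of_stirling_eq {i p : ℕ} (hi : i < n) (hs : stirling n k μ p = n - i) :
    p ∈ Sset n k μ i := by
  by_cases hp : ∃ j < n, p ∈ Sset n k μ j
  · obtain ⟨j, hj, hpj⟩ := hp
    rw [stirling_eq_of_mem_Sset hj hpj] at hs
    rwa [show i = j by omega]
  · push Not at hp
    rw [stirling_eq_zero hp] at hs
    omega

theorem stirling_lt_iff_mem_remSet {i p : ℕ} (hi : i < n) (hp : p ∈ Icc 1 (n * k)) :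
    stirling n k μ p < n - i ↔ p ∈ remSet n k μ (i + 1) := by
  rw [mem_remSet_iff, and_iff_right hp]
  by_cases hex : ∃ j < n, p ∈ Sset n k μ j
  · obtain ⟨j, hj, hpj⟩ := hex
    rw [stirling_eq_of_mem_Sset hj hpj]
    constructor
    · intro hlt i' hi' hpi'
      have := eq_of_mem_Sset_of_mem_Sset hpi' hpj
      omega
    · intro hnot
      have : i < j := by_contra fun h => hnot j (by omega) hpj
      omega
  · push Not at hex
    rw [stirling_eq_zero hex]
    exact iff_of_true (by omega) fun j hj => hex j (by omega)

theorem filter_remSet_succ_lt_of_isLeast {i x : ℕ} (hx : IsLeast ↑(Sset n k μ i) x) :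
    {p ∈ remSet n k μ (i + 1) | p < x} = {p ∈ remSet n k μ i | p < x} := by
  ext p
  simp only [mem_filter, remSet_succ, mem_sdiff]
  exact ⟨fun ⟨⟨hp, _⟩, hpx⟩ => ⟨hp, hpx⟩,
    fun ⟨hp, hpx⟩ => ⟨⟨hp, fun hpS => (hx.2 hpS).not_gt hpx⟩, hpx⟩⟩

theorem filter_Ico_stirling_lt {i x : ℕ} (hi : i < n) (hx : x ≤ n * k + 1) :
    ((Ico 1 x).filter fun p => stirling n k μ p < n - i) = {p ∈ remSet n k μ (i + 1) | p < x} := by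
  ext p
  simp only [mem_filter, mem_Ico]
  constructor
  · rintro ⟨⟨hp1, hpx⟩, hs⟩
    exact ⟨(stirling_lt_iff_mem_remSet hi (mem_Icc.2 ⟨hp1, by omega⟩)).1 hs, hpx⟩
  · rintro ⟨hp, hpx⟩
    have hpIcc := (mem_remSet_iff.1 hp).1
    exact ⟨⟨(mem_Icc.1 hpIcc).1, hpx⟩, (stirling_lt_iff_mem_remSet hi hpIcc).2 hp⟩

end Construction

theorem stmt16_general (n k : ℕ) (μ : ℕ → ℕ)
    (i : ℕ) (hi : i < n) (ji : ℕ)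
    (hjiv : stirling n k μ ji = n - i)
    (hjimin : ∀ p, 1 ≤ p → p < ji → stirling n k μ p ≠ n - i) :
    μ i = ((Finset.Ico 1 ji).filter fun p => stirling n k μ p < n - i).card := by
  have hjiS : ji ∈ Sset n k μ i := mem_Sset_of_stirling_eq hi hjiv
  have hleast : IsLeast ↑(Sset n k μ i) ji :=
    ⟨hjiS, fun p hp => not_lt.1 fun hlt =>
      hjimin p (mem_Icc.1 (mem_Icc_of_mem_Sset hp)).1 hlt (stirling_eq_of_mem_Sset hi hp)⟩
  have hji : ji ≤ n * k + 1 := by have := mem_Icc.1 (mem_Icc_of_mem_Sset hjiS); omega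
  rw [filter_Ico_stirling_lt hi hji, filter_remSet_succ_lt_of_isLeast hleast]
  exact (card_filter_lt_of_isLeast_window _ hleast).symm

/-- `μ` is recovered from the `k`-Stirling permutation `s` constructed
from it: for `1 ≤ i ≤ n` (0-based `i < n` here), `μ_i` equals the number of entries
smaller than `n + 1 − i` occurring before the first occurrence `j(i)` of `n + 1 − i`
in `s`. -/
theorem stmt16 (n k : ℕ) (hn : 1 ≤ n) (hk : 1 ≤ k) (μ : ℕ → ℕ)
    (hμ : ∀ i, i < n → μ i ≤ (n - 1 - i) * k)
    (i : ℕ) (hi : i < n) (ji : ℕ) (hji1 : 1 ≤ ji)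
    (hjiv : stirling n k μ ji = n - i)
    (hjimin : ∀ p, 1 ≤ p → p < ji → stirling n k μ p ≠ n - i) :
    μ i = ((Finset.Ico 1 ji).filter fun p => stirling n k μ p < n - i).card :=
  stmt16_general n k μ i hi ji hjiv hjimin
end

section
/- Let k ≥ 1 and let μ = (μ₁,…,μ_n) be a sequence of nonnegative integers. Define sequences α₁,…,α_k of nonnegative integers recursively by the componentwise floor α_i := ⌊(μ − Σ_{j=1}^{i−1} α_j)/(k+1−i)⌋. Then Σ_{i=1}^{k} α_i = μ, and for all 1 ≤ i < j ≤ k the sequences are admissible in the sense that α_i ⊆_H α_j, i.e., componentwise (α_j)_l − 1 ≤ (α_i)_l ≤ (α_j)_l for all 1 ≤ l ≤ n. -/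
/-- The decomposition sequences: `α_{i+1} = ⌊(μ − Σ_{j ≤ i-1 (0-based j < i)} α_j) / (k − i)⌋`
componentwise (0-based `i`, so the divisor `k + 1 − i` of the 1-based statement is
`k − i` here), using floor division `Int.fdiv`. -/
def alphaSeq (k : ℕ) (μ : ℕ → ℤ) : ℕ → ℕ → ℤ
  | i => fun l =>
      Int.fdiv (μ l - ∑ j ∈ (Finset.range i).attach, alphaSeq k μ j.1 l)
        ((k : ℤ) - (i : ℤ))
  termination_by i => i
  decreasing_by exact Finset.mem_range.mp j.2

lemma alpha_def (k : ℕ) (μ : ℕ → ℤ) (i l : ℕ) :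
    alphaSeq k μ i l =
      Int.fdiv (μ l - ∑ j ∈ Finset.range i, alphaSeq k μ j l) ((k:ℤ) - i) := by
  rw [alphaSeq]
  show Int.fdiv (μ l - ∑ j ∈ (Finset.range i).attach, alphaSeq k μ j.1 l) _ = _
  rw [Finset.sum_attach (Finset.range i) (fun j => alphaSeq k μ j l)]

lemma sum_alpha (k : ℕ) (hk : 1 ≤ k) (μ : ℕ → ℤ) (hμ : ∀ l, 0 ≤ μ l) (l : ℕ) :
    ∀ i, i ≤ k → ∑ j ∈ Finset.range i, alphaSeq k μ j l
      = (μ l / k) * i + max 0 (μ l % k - ((k:ℤ) - i)) := by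
  have hK : (0:ℤ) < (k:ℤ) := by exact_mod_cast hk
  set m := μ l with hm
  set q := m / (k:ℤ) with hq
  set s := m % (k:ℤ) with hs
  have hqs : (k:ℤ) * q + s = m := Int.mul_ediv_add_emod m k
  have hs0 : 0 ≤ s := Int.emod_nonneg m hK.ne'
  have hsK : s < (k:ℤ) := Int.emod_lt_of_pos m hK
  intro i
  induction i with
  | zero =>
    intro _
    simp only [Finset.range_zero, Finset.sum_empty, Nat.cast_zero, mul_zero, zero_add, sub_zero]
    rw [max_eq_left (by omega)]
  | succ i ih =>
    intro hik
    have hik' : i < k := by omega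
    have ihe := ih (le_of_lt hik')
    set d : ℤ := (k:ℤ) - i with hd
    have hd0 : 0 < d := by
      have : (i:ℤ) < (k:ℤ) := by exact_mod_cast hik'
      omega
    rw [Finset.sum_range_succ, ihe, alpha_def, ihe]
    have hval : m - (q * (i:ℤ) + max 0 (s - d)) = q * d + (s - max 0 (s - d)) := by
      rw [← hqs, hd]; ring
    rw [hval, Int.fdiv_eq_ediv_of_nonneg _ hd0.le]
    have hre : q * d + (s - max 0 (s - d)) = (s - max 0 (s - d)) + d * q := by ring
    rw [hre, Int.add_mul_ediv_left _ _ hd0.ne']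
    rcases le_or_gt d s with hds | hds
    · rw [max_eq_right (by omega), show s - (s - d) = d by ring, Int.ediv_self hd0.ne']
      rw [max_eq_right (by push_cast; omega)]
      push_cast
      ring
    · rw [max_eq_left (by omega), sub_zero, Int.ediv_eq_zero_of_lt hs0 hds]
      rw [max_eq_left (by push_cast; omega)]
      push_cast
      ring

lemma alpha_val (k : ℕ) (hk : 1 ≤ k) (μ : ℕ → ℤ) (hμ : ∀ l, 0 ≤ μ l) (l i : ℕ)
    (hik : i < k) :
    alphaSeq k μ i l = μ l / k + (if (k:ℤ) - i ≤ μ l % k then 1 else 0) := by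
  have h1 := sum_alpha k hk μ hμ l i (le_of_lt hik)
  have h2 := sum_alpha k hk μ hμ l (i+1) (by omega)
  rw [Finset.sum_range_succ, h1] at h2
  have : alphaSeq k μ i l
      = μ l / k * ((i:ℤ)+1) + max 0 (μ l % k - ((k:ℤ) - ((i:ℤ)+1)))
        - (μ l / k * (i:ℤ) + max 0 (μ l % k - ((k:ℤ) - (i:ℤ)))) := by
    push_cast at h2; omega
  rw [this]
  set s := μ l % (k:ℤ)
  set d : ℤ := (k:ℤ) - i with hd
  have hd0 : 0 < d := by
    have : (i:ℤ) < (k:ℤ) := by exact_mod_cast hik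
    omega
  have he1 : (k:ℤ) - ((i:ℤ)+1) = d - 1 := by omega
  rw [he1]
  rcases le_or_gt d s with hds | hds
  · rw [if_pos hds, max_eq_right (by omega), max_eq_right (by omega)]; ring
  · rw [if_neg (by omega), max_eq_left (by omega), max_eq_left (by omega)]; ring

/-- for `k ≥ 1` and a sequence `μ` of nonnegative integers, the sequences
`α₁, …, α_k` defined by the componentwise floors `α_i = ⌊(μ − Σ_{j<i} α_j)/(k+1−i)⌋`
are nonnegative, sum to `μ`, and are pairwise admissible: for `i < j`,
`(α_j)_l − 1 ≤ (α_i)_l ≤ (α_j)_l` for every `l`. -/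
theorem stmt17 (k : ℕ) (hk : 1 ≤ k) (μ : ℕ → ℤ) (hμ : ∀ l, 0 ≤ μ l) :
    (∀ i l, i < k → 0 ≤ alphaSeq k μ i l) ∧
    (∀ l, ∑ i ∈ Finset.range k, alphaSeq k μ i l = μ l) ∧
    (∀ i j l, i < j → j < k →
      alphaSeq k μ j l - 1 ≤ alphaSeq k μ i l ∧ alphaSeq k μ i l ≤ alphaSeq k μ j l) := by
  have hK : (0:ℤ) < (k:ℤ) := by exact_mod_cast hk
  refine ⟨?_, ?_, ?_⟩
  · intro i l hik
    rw [alpha_val k hk μ hμ l i hik]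
    have hq : 0 ≤ μ l / (k:ℤ) := Int.ediv_nonneg (hμ l) hK.le
    split_ifs <;> omega
  · intro l
    have := sum_alpha k hk μ hμ l k le_rfl
    rw [this, sub_self, sub_zero,
      max_eq_right (Int.emod_nonneg (μ l) hK.ne'),
      mul_comm]
    exact Int.mul_ediv_add_emod (μ l) k
  · intro i j l hij hjk
    rw [alpha_val k hk μ hμ l i (by omega), alpha_val k hk μ hμ l j hjk]
    have : (i:ℤ) < (j:ℤ) := by exact_mod_cast hij
    split_ifs <;> omega
end
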